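/- Let C : ℝⁿ → ℝ be a quadratic polynomial with gradient J ≠ 0 at z and Hessian H with spectral radius ρ. Let ε^G be a minimizer of ‖ε‖ subject to C(z+ε)=0, and let ε^S = −(C(z)/‖J‖²)Jᵀ be the Sampson step. Then ‖ε^S‖ ≤ ‖ε^G‖ + (ρ/(2‖J‖))·‖ε^G‖². -/

import Mathlib

/-!
Evaluating the exact quadratic expansion at `ε^G`, where the constraint vanishes, gives
`C z = -(J ⬝ ε^G) - ½ ε^Gᵀ H ε^G`. Cauchy–Schwarz bounds the linear term by `‖J‖ ‖ε^G‖`, and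
since `H` is symmetric with eigenvalues in `[-ρ, ρ]`, `-ρ I ≤ H ≤ ρ I` in the Loewner order
bounds the quadratic term by `ρ ‖ε^G‖²`. Dividing by `‖J‖` gives the claim, because
`‖ε^S‖ = |C z| / ‖J‖`.
-/

open Matrix

/-- The Euclidean norm of a vector in `ℝⁿ`. -/
noncomputable def euclNorm {n : ℕ} (v : Fin n → ℝ) : ℝ :=
  Real.sqrt (∑ i, v i ^ 2)

/-- The spectral radius of a real square matrix. -/
noncomputable def specRad {m : ℕ} (A : Matrix (Fin m) (Fin m) ℝ) : ℝ :=
  ⨆ μ ∈ spectrum ℝ A, |μ|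

lemma euclNorm_eq_norm_toLp {n : ℕ} (v : Fin n → ℝ) : euclNorm v = ‖WithLp.toLp 2 v‖ := by
  simp [euclNorm, EuclideanSpace.norm_eq]

lemma euclNorm_nonneg {n : ℕ} (v : Fin n → ℝ) : 0 ≤ euclNorm v :=
  Real.sqrt_nonneg _

lemma euclNorm_smul {n : ℕ} (c : ℝ) (v : Fin n → ℝ) : euclNorm (c • v) = |c| * euclNorm v := by
  simp only [euclNorm_eq_norm_toLp, WithLp.toLp_smul, norm_smul, Real.norm_eq_abs]

lemma abs_dotProduct_le_euclNorm_mul {n : ℕ} (v w : Fin n → ℝ) :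
    |v ⬝ᵥ w| ≤ euclNorm v * euclNorm w := by
  rw [euclNorm_eq_norm_toLp, euclNorm_eq_norm_toLp, dotProduct_comm]
  exact abs_real_inner_le_norm (WithLp.toLp 2 v) (WithLp.toLp 2 w)

lemma dotProduct_self_eq_euclNorm_sq {n : ℕ} (v : Fin n → ℝ) : v ⬝ᵥ v = euclNorm v ^ 2 := by
  rw [euclNorm_eq_norm_toLp, ← real_inner_self_eq_norm_sq]
  rfl

lemma abs_le_specRad {m : ℕ} (A : Matrix (Fin m) (Fin m) ℝ) {μ : ℝ}
    (hμ : μ ∈ spectrum ℝ A) : |μ| ≤ specRad A := by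
  refine le_ciSup₂ (f := fun μ (_ : μ ∈ spectrum ℝ A) => |μ|) ?_ μ hμ
  refine (A.finite_real_spectrum.image abs).bddAbove.mono ?_
  rintro _ ⟨_, ⟨ν, rfl⟩, ⟨hν, rfl⟩⟩
  exact Set.mem_image_of_mem _ hν

lemma dotProduct_mulVec_le_of_spectrum_le {ι : Type*} [Fintype ι] [DecidableEq ι]
    {A : Matrix ι ι ℝ} (hA : A.IsHermitian) {c : ℝ} (hc : ∀ μ ∈ spectrum ℝ A, μ ≤ c)
    (x : ι → ℝ) : x ⬝ᵥ A *ᵥ x ≤ c * (x ⬝ᵥ x) := by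
  have hpsd : (algebraMap ℝ _ c - A).PosSemidef := by
    refine posSemidef_iff_isHermitian_and_spectrum_nonneg.mpr ⟨?_, ?_⟩
    · rw [Algebra.algebraMap_eq_smul_one]
      exact (isHermitian_one.smul (IsSelfAdjoint.all c)).sub hA
    rw [← spectrum.singleton_sub_eq]
    rintro _ ⟨_, rfl, μ, hμ, rfl⟩
    exact sub_nonneg.mpr (hc μ hμ)
  have := hpsd.dotProduct_mulVec_nonneg x
  rw [Algebra.algebraMap_eq_smul_one, sub_mulVec, smul_mulVec, one_mulVec, dotProduct_sub,
    dotProduct_smul, star_trivial, smul_eq_mul] at this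
  linarith

lemma abs_dotProduct_mulVec_le_specRad_mul {m : ℕ} {A : Matrix (Fin m) (Fin m) ℝ}
    (hA : A.IsSymm) (x : Fin m → ℝ) : |x ⬝ᵥ A *ᵥ x| ≤ specRad A * euclNorm x ^ 2 := by
  have hA' : A.IsHermitian := by
    rwa [IsHermitian, conjTranspose_eq_transpose_of_trivial]
  have upper := dotProduct_mulVec_le_of_spectrum_le hA'
    (fun μ hμ => (le_abs_self μ).trans (abs_le_specRad A hμ)) x
  have lower := dotProduct_mulVec_le_of_spectrum_le hA'.neg (c := specRad A)
    (fun μ hμ => by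
      rw [← spectrum.neg_eq] at hμ
      simpa using (neg_le_abs (-μ)).trans (abs_le_specRad A hμ)) x
  rw [neg_mulVec, dotProduct_neg] at lower
  rw [← dotProduct_self_eq_euclNorm_sq]
  exact abs_le.mpr ⟨by linarith, upper⟩

lemma abs_le_of_add_dotProduct_add_quadForm_eq_zero {m : ℕ} {A : Matrix (Fin m) (Fin m) ℝ}
    (hA : A.IsSymm) {c : ℝ} {J ε : Fin m → ℝ} (h : c + J ⬝ᵥ ε + 1 / 2 * (ε ⬝ᵥ A *ᵥ ε) = 0) :
    |c| ≤ euclNorm J * euclNorm ε + 1 / 2 * (specRad A * euclNorm ε ^ 2) := by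
  have hlin := abs_dotProduct_le_euclNorm_mul J ε
  have hquad := abs_dotProduct_mulVec_le_specRad_mul hA ε
  have hc : c = -(J ⬝ᵥ ε) - 1 / 2 * (ε ⬝ᵥ A *ᵥ ε) := by linarith
  have := abs_sub (-(J ⬝ᵥ ε)) (1 / 2 * (ε ⬝ᵥ A *ᵥ ε))
  rw [abs_neg, abs_mul, abs_of_pos (by norm_num : (0 : ℝ) < 1 / 2), ← hc] at this
  linarith

lemma euclNorm_neg_div_sq_smul {n : ℕ} (c : ℝ) (J : Fin n → ℝ) :
    euclNorm ((-(c / euclNorm J ^ 2)) • J) = |c| / euclNorm J := by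
  rw [euclNorm_smul, abs_neg, abs_div, abs_of_nonneg (by positivity : 0 ≤ euclNorm J ^ 2)]
  rcases (euclNorm_nonneg J).eq_or_lt with hJ | hJ
  · simp [← hJ]
  · field_simp

theorem stmt3_general {n : ℕ} (C : (Fin n → ℝ) → ℝ) (z J : Fin n → ℝ)
    (H : Matrix (Fin n) (Fin n) ℝ) (hH : H.IsSymm)
    (ρ : ℝ) (hρ : ρ = specRad H)
    (hTaylor : ∀ ε, C (z + ε) = C z + J ⬝ᵥ ε + (1 / 2) * (ε ⬝ᵥ H.mulVec ε))
    (εG : Fin n → ℝ) (hG : C (z + εG) = 0)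
    (εS : Fin n → ℝ) (hS : εS = (-(C z / euclNorm J ^ 2)) • J) :
    euclNorm εS ≤ euclNorm εG + ρ / (2 * euclNorm J) * euclNorm εG ^ 2 := by
  have hCz : |C z| ≤ euclNorm J * euclNorm εG + 1 / 2 * (ρ * euclNorm εG ^ 2) :=
    hρ ▸ abs_le_of_add_dotProduct_add_quadForm_eq_zero hH (hG ▸ (hTaylor εG).symm)
  rw [hS, euclNorm_neg_div_sq_smul]
  rcases (euclNorm_nonneg J).eq_or_lt with hJ | hJ
  -- `J = 0`: both divisions by `‖J‖` are `0`, so `ε^S = 0`.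
  · simp [← hJ, euclNorm_nonneg]
  · rw [div_le_iff₀ hJ]
    refine hCz.trans_eq ?_
    field_simp

/-- For a quadratic constraint `C` with gradient `J ≠ 0` at `z` and Hessian `H` of
spectral radius `ρ`: if `ε^G` minimizes `‖ε‖` subject to `C (z + ε) = 0` and
`ε^S = −(C z / ‖J‖²) • J` is the Sampson step, then
`‖ε^S‖ ≤ ‖ε^G‖ + (ρ / (2‖J‖)) ‖ε^G‖²`. -/
theorem stmt3 {n : ℕ} (C : (Fin n → ℝ) → ℝ) (z J : Fin n → ℝ)
    (H : Matrix (Fin n) (Fin n) ℝ) (hH : H.IsSymm)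
    (ρ : ℝ) (hρ : ρ = specRad H)
    (hTaylor : ∀ ε, C (z + ε) = C z + J ⬝ᵥ ε + (1 / 2) * (ε ⬝ᵥ H.mulVec ε))
    (hJ0 : J ≠ 0)
    (εG : Fin n → ℝ) (hG : C (z + εG) = 0)
    (hGmin : ∀ ε, C (z + ε) = 0 → euclNorm εG ≤ euclNorm ε)
    (εS : Fin n → ℝ) (hS : εS = (-(C z / euclNorm J ^ 2)) • J) :
    euclNorm εS ≤ euclNorm εG + ρ / (2 * euclNorm J) * euclNorm εG ^ 2 :=
  stmt3_general C z J H hH ρ hρ hTaylor εG hG εS hS
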